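/- Let T be a compact bounded linear operator on L² induced by a K⁰-kernel 𝐓 satisfying condition (iv), with subkernel operators Tₙ = PₙT. Then for every compact subset K of Π(T) \ {0}: every λ ∈ K belongs to Π(Tₙ) for all sufficiently large n, and as n → ∞ one has sup_{λ∈K} sup_{t∈ℝ} ‖𝐭′_{n|λ}(t) − 𝐭′_{|λ}(t)‖_{L²} → 0, sup_{λ∈K} sup_{s∈ℝ} ‖𝐭_{n|λ}(s) − 𝐭_{|λ}(s)‖_{L²} → 0, and sup_{λ∈K} sup_{(s,t)∈ℝ²} |𝐓_{n|λ}(s,t) − 𝐓_{|λ}(s,t)| → 0. -/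

import Mathlib

open MeasureTheory Filter Topology ContinuousLinearMap
open scoped ENNReal NNReal

noncomputable section

/-- `L²(ℝ)`, the complex Hilbert space of square-integrable functions on `ℝ`. -/
abbrev L2 : Type := MeasureTheory.Lp ℂ 2 (MeasureTheory.volume : MeasureTheory.Measure ℝ)

/-- Bounded linear operators on `L²`. -/
abbrev L2op : Type := L2 →L[ℂ] L2

/-- `T` is the integral operator induced by the kernel `K`:
`(Tf)(s) = ∫ K(s,t) f(t) dt` for every `f ∈ L²` and almost every `s`. -/
def IsInducedBy (T : L2op) (K : ℝ → ℝ → ℂ) : Prop :=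
  ∀ f : L2, ∀ᵐ s : ℝ, (T f : ℝ → ℂ) s = ∫ t : ℝ, K s t * (f : ℝ → ℂ) t

/-- `K` is a `K⁰`-kernel with associated Carleman functions `kt`, `kt'`:
`kt s = conj (K s ·)` and `kt' s = K · s` as elements of `L²`, the kernel is
continuous and vanishes at infinity, and both Carleman functions are continuous
and vanish at infinity in `L²`-norm. -/
structure IsK0Kernel (K : ℝ → ℝ → ℂ) (kt kt' : ℝ → L2) : Prop where
  repr_t : ∀ s : ℝ, (kt s : ℝ → ℂ) =ᵐ[volume] fun x => (starRingEnd ℂ) (K s x)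
  repr_t' : ∀ s : ℝ, (kt' s : ℝ → ℂ) =ᵐ[volume] fun x => K x s
  cont : Continuous fun p : ℝ × ℝ => K p.1 p.2
  vanish : Tendsto (fun p : ℝ × ℝ => K p.1 p.2) (cocompact (ℝ × ℝ)) (𝓝 0)
  cont_t : Continuous kt
  vanish_t : Tendsto kt (cocompact ℝ) (𝓝 0)
  cont_t' : Continuous kt'
  vanish_t' : Tendsto kt' (cocompact ℝ) (𝓝 0)

/-- The set `Π(T)` of regular values of `T`: those `λ` for which `I - λT` is invertible. -/
def regularSet (T : L2op) : Set ℂ := {lam : ℂ | IsUnit (1 - lam • T)}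

/-- The resolvent `R_λ(T) = (I - λT)⁻¹` (junk value `0` if `λ ∉ Π(T)`). -/
def res (T : L2op) (lam : ℂ) : L2op := Ring.inverse (1 - lam • T)

/-- The Fredholm resolvent `T_{|λ} = T R_λ(T)`. -/
def fres (T : L2op) (lam : ℂ) : L2op := T * res T lam

/-- The region of boundedness `∇_b({Sₙ})`. -/
def nablaB (S : ℕ → L2op) : Set ℂ :=
  {ζ : ℂ | ζ ≠ 0 ∧ ∃ M : ℝ, 0 < M ∧ ∃ N : ℕ, ∀ n > N,
      ζ ∈ regularSet (S n) ∧ ‖fres (S n) ζ‖ ≤ M}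

/-- The region of strong convergence `∇_s({Sₙ})`: the `ζ ∈ ∇_b({Sₙ})` such that
the Fredholm resolvents `S_{n|ζ}` converge in the strong operator topology. -/
def nablaS (S : ℕ → L2op) : Set ℂ :=
  {ζ : ℂ | ζ ∈ nablaB S ∧
    ∀ f : L2, ∃ g : L2, Tendsto (fun n => fres (S n) ζ f) atTop (𝓝 g)}

/-- Nuclear (trace class) operator on `L²`. -/
def IsNuclear (T : L2op) : Prop :=
  ∃ g h : ℕ → L2, Summable (fun k => ‖g k‖ * ‖h k‖) ∧
    ∀ f : L2, T f = ∑' k : ℕ, (inner ℂ f (g k) : ℂ) • h k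

/-- The characteristic function `χ` of the interval `(-τ, τ)`, with complex values. -/
def chi (t : ℝ) (x : ℝ) : ℂ := Set.indicator (Set.Ioo (-t) t) 1 x

/-- Condition (iv) for a `K⁰`-kernel `K` inducing `T`: the positive reals `τ n`
strictly increase to `+∞`, `P n` is the orthogonal projection given by multiplication
by `χₙ = chi (τ n)`, the subkernels `Kₙ(s,t) = χₙ(s)K(s,t)` and
`K̃ₙ(s,t) = χₙ(s)K(s,t)χₙ(t)` are `K⁰`-kernels, and the induced operators
`Tₙ = PₙT` and `T̃ₙ = PₙTPₙ` are nuclear. -/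
structure ConditionIV (K : ℝ → ℝ → ℂ) (T : L2op) (tau : ℕ → ℝ) (P : ℕ → L2op) : Prop where
  pos : ∀ n, 0 < tau n
  mono : StrictMono tau
  tendsto_top : Tendsto tau atTop atTop
  proj : ∀ n, ∀ f : L2, (P n f : ℝ → ℂ) =ᵐ[volume] fun x => chi (tau n) x * (f : ℝ → ℂ) x
  subker : ∀ n, ∃ kt kt' : ℝ → L2, IsK0Kernel (fun s t => chi (tau n) s * K s t) kt kt'
  subker' : ∀ n, ∃ kt kt' : ℝ → L2,
      IsK0Kernel (fun s t => chi (tau n) s * K s t * chi (tau n) t) kt kt'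
  nuclear : ∀ n, IsNuclear (P n * T)
  nuclear' : ∀ n, IsNuclear (P n * T * P n)

/-- `λₙ(λ) = λ(1 - βₙλ)⁻¹`. -/
def lamn (b : ℕ → ℂ) (lam : ℂ) (n : ℕ) : ℂ := lam * (1 - b n * lam)⁻¹

/-- The resolvent kernel for `K` at `λ` built from the resolvent Carleman function
`𝐭'_{|λ}(t) = R_λ(T)(kt' t)`:  `𝐓_{|λ}(s,t) = λ⟨𝐭'_{|λ}(t), 𝐭(s)⟩ + 𝐓(s,t)`
(the paper's inner product `⟨a,b⟩ = ∫ a conj b` is `inner b a` in Mathlib). -/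
def resKer (T : L2op) (K : ℝ → ℝ → ℂ) (kt kt' : ℝ → L2) (lam : ℂ) (s t : ℝ) : ℂ :=
  lam * (inner ℂ (kt s) (res T lam (kt' t)) : ℂ) + K s t

/-- The resolvent kernel for the subkernel `Kₙ` at `λ`:
`𝐓_{n|λ}(s,t) = λ χₙ(s) ⟨𝐭'_{n|λ}(t), 𝐭(s)⟩ + 𝐓ₙ(s,t)`, where
`𝐭'_{n|λ}(t) = R_λ(Tₙ) Pₙ (kt' t)` and `𝐓ₙ(s,t) = χₙ(s) 𝐓(s,t)`. -/
def resKerN (T : L2op) (K : ℝ → ℝ → ℂ) (kt kt' : ℝ → L2) (taun : ℝ) (Pn : L2op)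
    (lam : ℂ) (s t : ℝ) : ℂ :=
  lam * chi taun s * (inner ℂ (kt s) (res (Pn * T) lam (Pn (kt' t))) : ℂ) + chi taun s * K s t

/-- `R` is a resolvent kernel for the `K⁰`-kernel `K` at `λ` (Definition 2 of the paper):
`R` is a `K⁰`-kernel satisfying the two simultaneous integral equations and the
square-integrability condition. -/
def IsResolventKernel (K : ℝ → ℝ → ℂ) (lam : ℂ) (R : ℝ → ℝ → ℂ) : Prop :=
  (∃ rt rt' : ℝ → L2, IsK0Kernel R rt rt') ∧
  (∀ s t : ℝ, R s t - lam * ∫ x : ℝ, K s x * R x t = K s t) ∧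
  (∀ s t : ℝ, R s t - lam * ∫ x : ℝ, R s x * K x t = K s t) ∧
  (∀ f : L2, ∫⁻ s : ℝ, ((‖∫ t : ℝ, R s t * (f : ℝ → ℂ) t‖₊ : ℝ≥0) : ℝ≥0∞) ^ 2 < ⊤)

/-!
Since `T` is compact while `Pₙ → I` strongly with `‖Pₙ‖ ≤ 1`, we get `PₙT → T` in operator norm.
The resolvent `(S, λ) ↦ (I - λS)⁻¹` is jointly continuous wherever it exists, so by compactness
of `Kc` the resolvents `R_λ(PₙT)` exist for large `n` and converge to `R_λ(T)` uniformly in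
`λ ∈ Kc`. The Carleman functions are continuous and vanish at infinity, so their ranges are
relatively compact (where `Pₙ → I` uniformly) and they, like the kernel, are uniformly small
outside `(-τₙ, τₙ)`. Each of the three quantities is a bounded bilinear expression in these
uniformly convergent families with bounded limits, hence converges uniformly.
-/

section UniformConvergence

variable {ι α E : Type*} [SeminormedAddCommGroup E] {l : Filter ι}

theorem tendstoUniformlyOn_iff_tendsto_norm_sub {F : ι → α → E} {f : α → E} {s : Set α} :
    TendstoUniformlyOn F f l s ↔
      Tendsto (fun q : ι × α => ‖F q.1 q.2 - f q.2‖) (l ×ˢ 𝓟 s) (𝓝 0) := by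
  simp [Metric.tendstoUniformlyOn_iff, Metric.tendsto_nhds, eventually_prod_principal_iff,
    dist_eq_norm']

theorem TendstoUniformlyOn.tendsto_biSup_iSup_norm_sub {β : Type*} {F : ι → α × β → E}
    {f : α × β → E} {s : Set α} (h : TendstoUniformlyOn F f l (s ×ˢ Set.univ)) :
    Tendsto (fun n => ⨆ a ∈ s, ⨆ b, ‖F n (a, b) - f (a, b)‖) l (𝓝 0) := by
  rw [Metric.tendstoUniformlyOn_iff] at h
  refine Metric.tendsto_nhds.2 fun ε hε => (h (ε / 2) (half_pos hε)).mono fun n hn => ?_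
  have hle : ⨆ a ∈ s, ⨆ b, ‖F n (a, b) - f (a, b)‖ ≤ ε / 2 :=
    Real.iSup_le (fun a => Real.iSup_le (fun ha => Real.iSup_le (fun b => by
      simpa only [dist_eq_norm'] using (hn (a, b) ⟨ha, Set.mem_univ b⟩).le) (half_pos hε).le)
      (half_pos hε).le) (half_pos hε).le
  have h0 : 0 ≤ ⨆ a ∈ s, ⨆ b, ‖F n (a, b) - f (a, b)‖ :=
    Real.iSup_nonneg fun _ => Real.iSup_nonneg fun _ => Real.iSup_nonneg fun _ => norm_nonneg _
  rw [Real.dist_eq, sub_zero, abs_of_nonneg h0]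
  linarith

theorem TendstoUniformlyOn.comp_tendsto {X β : Type*} [TopologicalSpace X] [UniformSpace β]
    {F : X → α → β} {f : α → β} {x₀ : X} {s : Set α} (h : TendstoUniformlyOn F f (𝓝 x₀) s)
    {g : ι → X} (hg : Tendsto g l (𝓝 x₀)) : TendstoUniformlyOn (fun n => F (g n)) f l s :=
  fun u hu => hg.eventually (h u hu)

theorem tendstoUniformlyOn_nhds_of_continuousAt {X Y β : Type*} [TopologicalSpace X]
    [TopologicalSpace Y] [PseudoMetricSpace β] {f : X → Y → β} {x₀ : X} {K : Set Y}
    (hK : IsCompact K) (hf : ∀ y ∈ K, ContinuousAt ↿f (x₀, y)) :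
    TendstoUniformlyOn f (f x₀) (𝓝 x₀) K := by
  refine Metric.tendstoUniformlyOn_iff.2 fun ε hε =>
    hK.eventually_forall_of_forall_eventually fun y hy => ?_
  have hfix : ContinuousAt (fun z : X × Y => f x₀ z.2) (x₀, y) :=
    ContinuousAt.comp (g := ↿f) (f := fun z : X × Y => (x₀, z.2)) (hf y hy)
      (continuous_const.prodMk continuous_snd).continuousAt
  have h0 : dist (f x₀ y) (↿f (x₀, y)) < ε := by
    simpa [Function.HasUncurry.uncurry] using hε
  exact (hfix.dist (hf y hy)).eventually (gt_mem_nhds h0)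

theorem IsCompact.isBounded_image_of_continuousAt {X Y β : Type*} [TopologicalSpace X]
    [TopologicalSpace Y] [PseudoMetricSpace β] {Φ : X → Y → β} {x₀ : X} {K : Set Y}
    (hK : IsCompact K) (hΦ : ∀ y ∈ K, ContinuousAt ↿Φ (x₀, y)) :
    Bornology.IsBounded (Φ x₀ '' K) :=
  (hK.image_of_continuousOn fun y hy => (ContinuousAt.comp (g := ↿Φ) (f := fun y => (x₀, y))
    (hΦ y hy) (continuous_const.prodMk continuous_id).continuousAt).continuousWithinAt).isBounded

theorem isBounded_image_of_tendsto_cocompact {X β : Type*} [TopologicalSpace X]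
    [PseudoMetricSpace β] {g : X → β} {b : β} (hg : Continuous g)
    (hb : Tendsto g (cocompact X) (𝓝 b)) (s : Set X) : Bornology.IsBounded (g '' s) :=
  (hb.isCompact_insert_range_of_cocompact hg).isBounded.subset
    ((Set.image_subset_range g s).trans (Set.subset_insert b _))

end UniformConvergence

section Bilinear

variable {ι α β 𝕜₁ 𝕜₂ 𝕜₃ E F G : Type*} [NontriviallyNormedField 𝕜₁]
  [NontriviallyNormedField 𝕜₂] [NontriviallyNormedField 𝕜₃] [SeminormedAddCommGroup E]
  [SeminormedAddCommGroup F] [SeminormedAddCommGroup G] [NormedSpace 𝕜₁ E] [NormedSpace 𝕜₂ F]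
  [NormedSpace 𝕜₃ G] {σ₁₃ : 𝕜₁ →+* 𝕜₃} {σ₂₃ : 𝕜₂ →+* 𝕜₃} [RingHomIsometric σ₁₃]
  [RingHomIsometric σ₂₃] (B : E →SL[σ₁₃] F →SL[σ₂₃] G) {l : Filter ι}

theorem TendstoUniformlyOn.bilinear {u : ι → α → E} {u₀ : α → E} {v : ι → α → F} {v₀ : α → F}
    {s : Set α} (hu : TendstoUniformlyOn u u₀ l s) (hv : TendstoUniformlyOn v v₀ l s)
    (hu₀ : Bornology.IsBounded (u₀ '' s)) (hv₀ : Bornology.IsBounded (v₀ '' s)) :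
    TendstoUniformlyOn (fun n a => B (u n a) (v n a)) (fun a => B (u₀ a) (v₀ a)) l s := by
  obtain ⟨Cu, hCu⟩ := isBounded_iff_forall_norm_le.1 hu₀
  obtain ⟨Cv, hCv⟩ := isBounded_iff_forall_norm_le.1 hv₀
  rw [tendstoUniformlyOn_iff_tendsto_norm_sub] at hu hv ⊢
  have hlim : Tendsto (fun q : ι × α => ‖B‖ * (‖u q.1 q.2 - u₀ q.2‖ * (‖v q.1 q.2 - v₀ q.2‖ + Cv)
      + Cu * ‖v q.1 q.2 - v₀ q.2‖)) (l ×ˢ 𝓟 s) (𝓝 0) := by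
    simpa using ((hu.mul (hv.add_const Cv)).add (hv.const_mul Cu)).const_mul ‖B‖
  refine squeeze_zero' (Eventually.of_forall fun _ => norm_nonneg _) ?_ hlim
  refine eventually_prod_principal_iff.2 (Eventually.of_forall fun n a ha => ?_)
  have hsplit : B (u n a) (v n a) - B (u₀ a) (v₀ a)
      = B (u n a - u₀ a) (v n a) + B (u₀ a) (v n a - v₀ a) := by
    simp only [map_sub, sub_apply]; abel
  have hv_le : ‖v n a‖ ≤ ‖v n a - v₀ a‖ + Cv :=
    (norm_le_norm_sub_add _ _).trans (by gcongr; exact hCv _ (Set.mem_image_of_mem _ ha))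
  calc ‖B (u n a) (v n a) - B (u₀ a) (v₀ a)‖
      ≤ ‖B‖ * ‖u n a - u₀ a‖ * ‖v n a‖ + ‖B‖ * ‖u₀ a‖ * ‖v n a - v₀ a‖ := by
        rw [hsplit]
        exact (norm_add_le _ _).trans (add_le_add (B.le_opNorm₂ _ _) (B.le_opNorm₂ _ _))
    _ ≤ ‖B‖ * ‖u n a - u₀ a‖ * (‖v n a - v₀ a‖ + Cv) + ‖B‖ * Cu * ‖v n a - v₀ a‖ := by
        gcongr; exact hCu _ (Set.mem_image_of_mem _ ha)
    _ = ‖B‖ * (‖u n a - u₀ a‖ * (‖v n a - v₀ a‖ + Cv) + Cu * ‖v n a - v₀ a‖) := by ring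

variable {u : ι → α → E} {u₀ : α → E} {v : ι → β → F} {v₀ : β → F} {s : Set α} {t : Set β}

theorem Bornology.IsBounded.image_prod_bilinear (hu₀ : IsBounded (u₀ '' s))
    (hv₀ : IsBounded (v₀ '' t)) : IsBounded ((fun p => B (u₀ p.1) (v₀ p.2)) '' (s ×ˢ t)) := by
  obtain ⟨Cu, hCu⟩ := isBounded_iff_forall_norm_le.1 hu₀
  obtain ⟨Cv, hCv⟩ := isBounded_iff_forall_norm_le.1 hv₀
  refine isBounded_iff_forall_norm_le.2 ⟨‖B‖ * Cu * Cv, ?_⟩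
  rintro _ ⟨⟨a, b⟩, ⟨ha, hb⟩, rfl⟩
  have hu := hCu _ (Set.mem_image_of_mem _ ha)
  have hv := hCv _ (Set.mem_image_of_mem _ hb)
  calc ‖B (u₀ a) (v₀ b)‖ ≤ ‖B‖ * ‖u₀ a‖ * ‖v₀ b‖ := B.le_opNorm₂ _ _
    _ ≤ ‖B‖ * Cu * Cv := mul_le_mul (mul_le_mul_of_nonneg_left hu (norm_nonneg _)) hv
        (norm_nonneg _) (mul_nonneg (norm_nonneg _) ((norm_nonneg _).trans hu))

theorem TendstoUniformlyOn.prod_bilinear (hu : TendstoUniformlyOn u u₀ l s)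
    (hv : TendstoUniformlyOn v v₀ l t) (hu₀ : Bornology.IsBounded (u₀ '' s))
    (hv₀ : Bornology.IsBounded (v₀ '' t)) :
    TendstoUniformlyOn (fun n p => B (u n p.1) (v n p.2)) (fun p => B (u₀ p.1) (v₀ p.2)) l
      (s ×ˢ t) :=
  ((hu.comp Prod.fst).mono fun _ hp => hp.1).bilinear B ((hv.comp Prod.snd).mono fun _ hp => hp.2)
    (hu₀.subset (Set.image_comp _ _ _ ▸ Set.image_mono (Set.fst_image_prod_subset s t)))
    (hv₀.subset (Set.image_comp _ _ _ ▸ Set.image_mono (Set.snd_image_prod_subset s t)))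

end Bilinear

section OperatorSequences

variable {ι 𝕜 E F G : Type*} [RCLike 𝕜] [NormedAddCommGroup E] [NormedSpace 𝕜 E]
  [NormedAddCommGroup F] [NormedSpace 𝕜 F] [NormedAddCommGroup G] [NormedSpace 𝕜 G]
  {l : Filter ι}

theorem TendstoUniformlyOn.prod_apply {α β : Type*} {A : ι → α → E →L[𝕜] F}
    {A₀ : α → E →L[𝕜] F} {x : ι → β → E} {x₀ : β → E} {s : Set α} {t : Set β}
    (hA : TendstoUniformlyOn A A₀ l s) (hx : TendstoUniformlyOn x x₀ l t)
    (hA₀ : Bornology.IsBounded (A₀ '' s)) (hx₀ : Bornology.IsBounded (x₀ '' t)) :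
    TendstoUniformlyOn (fun n p => A n p.1 (x n p.2)) (fun p => A₀ p.1 (x₀ p.2)) l (s ×ˢ t) := by
  simpa using hA.prod_bilinear (ContinuousLinearMap.apply 𝕜 F).flip hx hA₀ hx₀

theorem tendstoUniformlyOn_of_tendsto_of_norm_le {A : ι → E →L[𝕜] F} {A₀ : E →L[𝕜] F} {C : ℝ}
    (hC : ∀ n, ‖A n‖ ≤ C) (hA : ∀ x, Tendsto (fun n => A n x) l (𝓝 (A₀ x)))
    {D : Set E} (hD : IsCompact D) : TendstoUniformlyOn (fun n x => A n x) A₀ l D := by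
  rw [← tendstoLocallyUniformlyOn_iff_tendstoUniformlyOn_of_compact hD,
    Metric.tendstoLocallyUniformlyOn_iff]
  intro ε hε x _
  set L := |C| + ‖A₀‖ + 1
  have hL : 0 < L := by positivity
  refine ⟨Metric.ball x (ε / (2 * L)), mem_nhdsWithin_of_mem_nhds
    (Metric.ball_mem_nhds _ (by positivity)), ?_⟩
  filter_upwards [(hA x).eventually (Metric.ball_mem_nhds _ (half_pos hε))] with n hn y hy
  rw [Metric.mem_ball, dist_eq_norm] at hy
  rw [dist_comm, dist_eq_norm] at hn
  have hsplit : A₀ y - A n y = (A₀ x - A n x) + (A₀ - A n) (y - x) := by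
    simp only [sub_apply, map_sub]; abel
  have hnorm : ‖A₀ - A n‖ ≤ L := (norm_sub_le _ _).trans (by linarith [hC n, le_abs_self C])
  calc dist (A₀ y) (A n y) ≤ ‖A₀ x - A n x‖ + ‖A₀ - A n‖ * ‖y - x‖ := by
        rw [dist_eq_norm, hsplit]
        exact (norm_add_le _ _).trans (add_le_add le_rfl ((A₀ - A n).le_opNorm _))
    _ < ε / 2 + L * (ε / (2 * L)) :=
        add_lt_add_of_lt_of_le hn (mul_le_mul hnorm hy.le (norm_nonneg _) hL.le)
    _ = ε := by field_simp; ring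

theorem tendsto_comp_of_isCompactOperator {A : ι → E →L[𝕜] F} {A₀ : E →L[𝕜] F} {C : ℝ}
    (hC : ∀ n, ‖A n‖ ≤ C) (hA : ∀ x, Tendsto (fun n => A n x) l (𝓝 (A₀ x)))
    {T : G →L[𝕜] E} (hT : IsCompactOperator T) :
    Tendsto (fun n => (A n).comp T) l (𝓝 (A₀.comp T)) := by
  have hunif := Metric.tendstoUniformlyOn_iff.1 <| tendstoUniformlyOn_of_tendsto_of_norm_le hC hA
    (hT.isCompact_closure_image_closedBall 1)
  refine Metric.tendsto_nhds.2 fun ε hε => (hunif (ε / 2) (half_pos hε)).mono fun n hn => ?_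
  refine lt_of_le_of_lt ?_ (half_lt_self hε)
  rw [dist_eq_norm]
  refine opNorm_le_of_unit_norm (half_pos hε).le fun x hx => ?_
  have hTx : T x ∈ closure (T '' Metric.closedBall 0 1) :=
    subset_closure ⟨x, by simp [hx], rfl⟩
  simpa [dist_eq_norm'] using (hn (T x) hTx).le

end OperatorSequences

theorem tendsto_eLpNorm_indicator_compl {α E : Type*} [MeasurableSpace α] {μ : Measure α}
    [NormedAddCommGroup E] {p : ℝ≥0∞} (hp0 : p ≠ 0) (hp : p ≠ ∞) {f : α → E} (hf : MemLp f p μ)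
    {s : ℕ → Set α} (hs : ∀ n, MeasurableSet (s n)) (hmem : ∀ x, ∀ᶠ n in atTop, x ∈ s n) :
    Tendsto (fun n => eLpNorm ((s n)ᶜ.indicator f) p μ) atTop (𝓝 0) := by
  have hlim : Tendsto (fun n => ∫⁻ x, ‖(s n)ᶜ.indicator f x‖ₑ ^ p.toReal ∂μ) atTop (𝓝 0) := by
    simpa using tendsto_lintegral_of_dominated_convergence' (f := fun _ => 0)
      (fun x => ‖f x‖ₑ ^ p.toReal)
      (fun n => (hf.1.indicator (hs n).compl).enorm.pow_const _)
      (fun n => Eventually.of_forall fun x => ENNReal.rpow_le_rpow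
        (by rw [enorm_indicator_eq_indicator_enorm]; exact Set.indicator_le_self _ _ x)
        ENNReal.toReal_nonneg)
      (lintegral_rpow_enorm_lt_top_of_eLpNorm_lt_top hp0 hp hf.2).ne
      (Eventually.of_forall fun x => tendsto_const_nhds.congr' <|
        (hmem x).mono fun n hn => by
          simp [hn, ENNReal.zero_rpow_of_pos (ENNReal.toReal_pos hp0 hp)])
  have hroot := hlim.ennrpow_const (1 / p.toReal)
  rw [ENNReal.zero_rpow_of_pos (one_div_pos.2 (ENNReal.toReal_pos hp0 hp))] at hroot
  simpa only [eLpNorm_eq_lintegral_rpow_enorm_toReal hp0 hp] using hroot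

section Truncation

theorem chi_of_mem {τ x : ℝ} (hx : x ∈ Set.Ioo (-τ) τ) : chi τ x = 1 := by
  simp [chi, hx]

theorem chi_of_notMem {τ x : ℝ} (hx : x ∉ Set.Ioo (-τ) τ) : chi τ x = 0 := by
  simp [chi, hx]

theorem conj_chi (τ x : ℝ) : starRingEnd ℂ (chi τ x) = chi τ x := by
  by_cases hx : x ∈ Set.Ioo (-τ) τ
  · simp [chi_of_mem hx]
  · simp [chi_of_notMem hx]

theorem chi_mul_eq_indicator (τ : ℝ) (g : ℝ → ℂ) :
    (fun x => chi τ x * g x) = (Set.Ioo (-τ) τ).indicator g := by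
  ext x
  by_cases hx : x ∈ Set.Ioo (-τ) τ
  · simp [chi_of_mem hx, hx]
  · simp [chi_of_notMem hx, hx]

theorem tendstoUniformly_chi_smul {X E : Type*} [NormedAddCommGroup X] [ProperSpace X]
    [NormedAddCommGroup E] [NormedSpace ℂ E] {f : X → E} (hf : Tendsto f (cocompact X) (𝓝 0))
    {φ : X → ℝ} (hφ : ∀ x, |φ x| ≤ ‖x‖) {tau : ℕ → ℝ} (htau : Tendsto tau atTop atTop) :
    TendstoUniformly (fun n x => chi (tau n) (φ x) • f x) f atTop := by
  refine Metric.tendstoUniformly_iff.2 fun ε hε => ?_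
  obtain ⟨R, -, hR⟩ := (Metric.hasBasis_cobounded_compl_closedBall (0 : X)).eventually_iff.1
    (Metric.cobounded_eq_cocompact (α := X) ▸ hf.eventually (Metric.ball_mem_nhds 0 hε))
  filter_upwards [htau.eventually_gt_atTop R] with n hn x
  by_cases hx : φ x ∈ Set.Ioo (-tau n) (tau n)
  · simpa [chi_of_mem hx] using hε
  · have hxR : x ∉ Metric.closedBall 0 R := by
      rw [Set.mem_Ioo, ← abs_lt, not_lt] at hx
      simp only [Metric.mem_closedBall, dist_zero_right, not_le]
      linarith [hφ x]
    simpa [chi_of_notMem hx] using hR hxR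

end Truncation

section Projections

variable {tau : ℕ → ℝ} {P : ℕ → L2op}

theorem norm_proj_le {Pn : L2op} {τ : ℝ}
    (hproj : ∀ f : L2, (Pn f : ℝ → ℂ) =ᵐ[volume] fun x => chi τ x * (f : ℝ → ℂ) x) :
    ‖Pn‖ ≤ 1 := by
  refine Pn.opNorm_le_bound zero_le_one fun f => ?_
  rw [one_mul, Lp.norm_def, Lp.norm_def, eLpNorm_congr_ae (hproj f), chi_mul_eq_indicator]
  exact ENNReal.toReal_mono (Lp.eLpNorm_ne_top f) (eLpNorm_indicator_le _)

theorem tendsto_proj_apply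
    (hproj : ∀ n, ∀ f : L2, (P n f : ℝ → ℂ) =ᵐ[volume] fun x => chi (tau n) x * (f : ℝ → ℂ) x)
    (htau : Tendsto tau atTop atTop) (f : L2) : Tendsto (fun n => P n f) atTop (𝓝 f) := by
  have hdiff : ∀ n, ‖P n f - f‖
      = (eLpNorm ((Set.Ioo (-tau n) (tau n))ᶜ.indicator (f : ℝ → ℂ)) 2 volume).toReal := by
    intro n
    rw [Lp.norm_def, ← eLpNorm_neg]
    refine congrArg _ (eLpNorm_congr_ae ?_)
    filter_upwards [Lp.coeFn_sub (P n f) f, hproj n f] with x hsub hP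
    rw [Pi.neg_apply, hsub, Pi.sub_apply, hP]
    by_cases hx : x ∈ Set.Ioo (-tau n) (tau n)
    · simp [chi_of_mem hx, hx]
    · simp [chi_of_notMem hx, hx]
  rw [tendsto_iff_norm_sub_tendsto_zero]
  simp_rw [hdiff]
  refine (ENNReal.tendsto_toReal ENNReal.zero_ne_top).comp
    (tendsto_eLpNorm_indicator_compl two_ne_zero ENNReal.ofNat_ne_top (Lp.memLp f)
      (fun n => measurableSet_Ioo) fun x => ?_)
  filter_upwards [htau.eventually_gt_atTop |x|] with n hn
  exact abs_lt.1 hn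

theorem tendsto_proj_mul_of_isCompactOperator
    (hproj : ∀ n, ∀ f : L2, (P n f : ℝ → ℂ) =ᵐ[volume] fun x => chi (tau n) x * (f : ℝ → ℂ) x)
    (htau : Tendsto tau atTop atTop) {T : L2op} (hT : IsCompactOperator T) :
    Tendsto (fun n => P n * T) atTop (𝓝 T) :=
  tendsto_comp_of_isCompactOperator (A₀ := ContinuousLinearMap.id ℂ L2)
    (fun n => norm_proj_le (hproj n)) (tendsto_proj_apply hproj htau) hT

theorem tendstoUniformly_proj_apply
    (hproj : ∀ n, ∀ f : L2, (P n f : ℝ → ℂ) =ᵐ[volume] fun x => chi (tau n) x * (f : ℝ → ℂ) x)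
    (htau : Tendsto tau atTop atTop) {g : ℝ → L2} (hg : Continuous g)
    (hg0 : Tendsto g (cocompact ℝ) (𝓝 0)) : TendstoUniformly (fun n s => P n (g s)) g atTop := by
  rw [← tendstoUniformlyOn_univ]
  exact ((tendstoUniformlyOn_of_tendsto_of_norm_le (A₀ := ContinuousLinearMap.id ℂ L2)
    (fun n => norm_proj_le (hproj n)) (tendsto_proj_apply hproj htau)
    (hg0.isCompact_insert_range_of_cocompact hg)).comp g).mono
    fun s _ => Set.mem_insert_of_mem _ ⟨s, rfl⟩

end Projections

section Resolvent

theorem continuousAt_res {T : L2op} {lam : ℂ} (h : lam ∈ regularSet T) :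
    ContinuousAt ↿res (T, lam) := by
  obtain ⟨u, hu⟩ := h
  have hinv : ContinuousAt Ring.inverse ((1 : L2op) - lam • T) :=
    hu ▸ NormedRing.inverse_continuousAt u
  exact ContinuousAt.comp (g := Ring.inverse) (f := fun p : L2op × ℂ => 1 - p.2 • p.1) hinv
    (continuous_const.sub (continuous_snd.smul continuous_fst)).continuousAt

theorem eventually_forall_mem_regularSet {T : L2op} {Kc : Set ℂ} (hKc : IsCompact Kc)
    (h : Kc ⊆ regularSet T) : ∀ᶠ S in 𝓝 T, ∀ lam ∈ Kc, lam ∈ regularSet S :=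
  hKc.eventually_forall_of_forall_eventually fun _ hlam =>
    (continuous_const.sub (continuous_snd.smul continuous_fst)).continuousAt.eventually_mem
      (Units.isOpen.mem_nhds (h hlam))

end Resolvent

section ResolventCarleman

variable {T : L2op} {K : ℝ → ℝ → ℂ} {kt kt' : ℝ → L2} {tau : ℕ → ℝ} {P : ℕ → L2op}
  {Kc : Set ℂ}

theorem tendstoUniformlyOn_apply_proj_of_continuousAt {Φ : L2op → ℂ → L2op} (hKc : IsCompact Kc)
    (hΦ : ∀ lam ∈ Kc, ContinuousAt ↿Φ (T, lam)) (hPT : Tendsto (fun n => P n * T) atTop (𝓝 T))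
    {g : ℝ → L2} (hPg : TendstoUniformly (fun n t => P n (g t)) g atTop)
    (hg : Bornology.IsBounded (g '' Set.univ)) :
    TendstoUniformlyOn (fun n (q : ℂ × ℝ) => Φ (P n * T) q.1 (P n (g q.2)))
      (fun q => Φ T q.1 (g q.2)) atTop (Kc ×ˢ Set.univ) :=
  ((tendstoUniformlyOn_nhds_of_continuousAt hKc hΦ).comp_tendsto hPT).prod_apply
    hPg.tendstoUniformlyOn (hKc.isBounded_image_of_continuousAt hΦ) hg

theorem tendstoUniformlyOn_chi_smul_adjoint_res (hKc : IsCompact Kc) (hreg : Kc ⊆ regularSet T)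
    (hPT : Tendsto (fun n => P n * T) atTop (𝓝 T)) (hkt : Continuous kt)
    (hkt0 : Tendsto kt (cocompact ℝ) (𝓝 0)) (htau : Tendsto tau atTop atTop) :
    TendstoUniformlyOn (fun n (q : ℂ × ℝ) => chi (tau n) q.2 • adjoint (res (P n * T) q.1) (kt q.2))
      (fun q => adjoint (res T q.1) (kt q.2)) atTop (Kc ×ˢ Set.univ) := by
  have hΦ : ∀ lam ∈ Kc, ContinuousAt (↿fun S lam => adjoint (res S lam)) (T, lam) :=
    fun lam hlam => (adjoint (𝕜 := ℂ) (E := L2) (F := L2)).continuous.continuousAt.comp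
      (continuousAt_res (hreg hlam))
  have hχk := tendstoUniformly_chi_smul hkt0 (φ := id) (fun x => (Real.norm_eq_abs x).ge) htau
  simpa using ((tendstoUniformlyOn_nhds_of_continuousAt hKc hΦ).comp_tendsto hPT).prod_apply
    hχk.tendstoUniformlyOn (hKc.isBounded_image_of_continuousAt hΦ)
    (isBounded_image_of_tendsto_cocompact hkt hkt0 _)

theorem resKerN_eq_inner (T : L2op) (K : ℝ → ℝ → ℂ) (kt kt' : ℝ → L2) (τ : ℝ) (Pn : L2op)
    (lam : ℂ) (s t : ℝ) : resKerN T K kt kt' τ Pn lam s t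
      = inner ℂ (chi τ s • kt s) ((lam • res (Pn * T) lam) (Pn (kt' t))) + chi τ s • K s t := by
  simp only [resKerN, inner_smul_left, conj_chi, smul_apply, inner_smul_right, smul_eq_mul]
  ring

theorem resKer_eq_inner (T : L2op) (K : ℝ → ℝ → ℂ) (kt kt' : ℝ → L2) (lam : ℂ) (s t : ℝ) :
    resKer T K kt kt' lam s t = inner ℂ (kt s) ((lam • res T lam) (kt' t)) + K s t := by
  simp only [resKer, smul_apply, inner_smul_right]

theorem tendstoUniformlyOn_resKerN (hKc : IsCompact Kc) (hreg : Kc ⊆ regularSet T)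
    (hPT : Tendsto (fun n => P n * T) atTop (𝓝 T))
    (hPk : TendstoUniformly (fun n t => P n (kt' t)) kt' atTop) (hK : IsK0Kernel K kt kt')
    (htau : Tendsto tau atTop atTop) :
    TendstoUniformlyOn (fun n (q : ℂ × ℝ × ℝ) => resKerN T K kt kt' (tau n) (P n) q.1 q.2.1 q.2.2)
      (fun q => resKer T K kt kt' q.1 q.2.1 q.2.2) atTop (Kc ×ˢ Set.univ) := by
  have hΦ : ∀ lam ∈ Kc, ContinuousAt (↿fun S (lam : ℂ) => lam • res S lam) (T, lam) :=
    fun lam hlam => continuousAt_snd.smul (continuousAt_res (hreg hlam))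
  have hk' := isBounded_image_of_tendsto_cocompact hK.cont_t' hK.vanish_t' Set.univ
  have hres := tendstoUniformlyOn_apply_proj_of_continuousAt hKc hΦ hPT hPk hk'
  have hres₀ : Bornology.IsBounded ((fun q : ℂ × ℝ => (q.1 • res T q.1) (kt' q.2)) ''
      (Kc ×ˢ Set.univ)) := by
    simpa using (hKc.isBounded_image_of_continuousAt hΦ).image_prod_bilinear
      (ContinuousLinearMap.apply ℂ L2).flip hk'
  have hχk :=
    tendstoUniformly_chi_smul hK.vanish_t (φ := id) (fun x => (Real.norm_eq_abs x).ge) htau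
  have hχK := tendstoUniformly_chi_smul hK.vanish (φ := Prod.fst) (fun p => norm_fst_le p) htau
  have hinner := (hχk.tendstoUniformlyOn (s := Set.univ)).prod_bilinear (innerSL ℂ) hres
    (isBounded_image_of_tendsto_cocompact hK.cont_t hK.vanish_t _) hres₀
  have hsum := ((hinner.comp fun q : ℂ × ℝ × ℝ => (q.2.1, q.1, q.2.2)).mono
    fun q hq => ⟨Set.mem_univ _, hq.1, Set.mem_univ _⟩).add
    ((hχK.comp Prod.snd).tendstoUniformlyOn (s := Kc ×ˢ Set.univ))
  refine (hsum.congr (Eventually.of_forall fun n q _ => ?_)).congr_right fun q _ => ?_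
  · simp only [resKerN_eq_inner, Pi.add_apply, Function.comp_apply, innerSL_apply_apply, id]
  · simp only [resKer_eq_inner, Pi.add_apply, Function.comp_apply, innerSL_apply_apply]

end ResolventCarleman

theorem statement12_general (T : L2op) (K : ℝ → ℝ → ℂ) (kt kt' : ℝ → L2)
    (hK : IsK0Kernel K kt kt')
    (tau : ℕ → ℝ) (P : ℕ → L2op) (hiv : ConditionIV K T tau P)
    (hcpt : IsCompactOperator (⇑T : L2 → L2))
    (Kc : Set ℂ) (hKc : IsCompact Kc) (hKcsub : Kc ⊆ regularSet T \ {0}) :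
    (∀ᶠ n in atTop, ∀ lam ∈ Kc, lam ∈ regularSet (P n * T)) ∧
    Tendsto (fun n => ⨆ lam ∈ Kc, ⨆ t : ℝ,
        ‖res (P n * T) lam (P n (kt' t)) - res T lam (kt' t)‖) atTop (𝓝 (0 : ℝ)) ∧
    Tendsto (fun n => ⨆ lam ∈ Kc, ⨆ s : ℝ,
        ‖chi (tau n) s • (adjoint (res (P n * T) lam)) (kt s)
          - (adjoint (res T lam)) (kt s)‖) atTop (𝓝 (0 : ℝ)) ∧
    Tendsto (fun n => ⨆ lam ∈ Kc, ⨆ p : ℝ × ℝ,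
        ‖resKerN T K kt kt' (tau n) (P n) lam p.1 p.2
          - resKer T K kt kt' lam p.1 p.2‖) atTop (𝓝 (0 : ℝ)) := by
  have hreg : Kc ⊆ regularSet T := fun _ hlam => (hKcsub hlam).1
  have hPT := tendsto_proj_mul_of_isCompactOperator hiv.proj hiv.tendsto_top hcpt
  have hPk := tendstoUniformly_proj_apply hiv.proj hiv.tendsto_top hK.cont_t' hK.vanish_t'
  refine ⟨hPT.eventually (eventually_forall_mem_regularSet hKc hreg), ?_, ?_, ?_⟩
  · exact (tendstoUniformlyOn_apply_proj_of_continuousAt hKc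
      (fun _ hlam => continuousAt_res (hreg hlam)) hPT hPk
      (isBounded_image_of_tendsto_cocompact hK.cont_t' hK.vanish_t' _)).tendsto_biSup_iSup_norm_sub
  · exact (tendstoUniformlyOn_chi_smul_adjoint_res hKc hreg hPT hK.cont_t hK.vanish_t
      hiv.tendsto_top).tendsto_biSup_iSup_norm_sub
  · exact (tendstoUniformlyOn_resKerN hKc hreg hPT hPk hK
      hiv.tendsto_top).tendsto_biSup_iSup_norm_sub

theorem statement12 (T : L2op) (K : ℝ → ℝ → ℂ) (kt kt' : ℝ → L2)
    (hK : IsK0Kernel K kt kt') (hT : IsInducedBy T K)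
    (tau : ℕ → ℝ) (P : ℕ → L2op) (hiv : ConditionIV K T tau P)
    (hcpt : IsCompactOperator (⇑T : L2 → L2))
    (Kc : Set ℂ) (hKc : IsCompact Kc) (hKcsub : Kc ⊆ regularSet T \ {0}) :
    (∀ᶠ n in atTop, ∀ lam ∈ Kc, lam ∈ regularSet (P n * T)) ∧
    Tendsto (fun n => ⨆ lam ∈ Kc, ⨆ t : ℝ,
        ‖res (P n * T) lam (P n (kt' t)) - res T lam (kt' t)‖) atTop (𝓝 (0 : ℝ)) ∧
    Tendsto (fun n => ⨆ lam ∈ Kc, ⨆ s : ℝ,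
        ‖chi (tau n) s • (adjoint (res (P n * T) lam)) (kt s)
          - (adjoint (res T lam)) (kt s)‖) atTop (𝓝 (0 : ℝ)) ∧
    Tendsto (fun n => ⨆ lam ∈ Kc, ⨆ p : ℝ × ℝ,
        ‖resKerN T K kt kt' (tau n) (P n) lam p.1 p.2
          - resKer T K kt kt' lam p.1 p.2‖) atTop (𝓝 (0 : ℝ)) :=
  statement12_general T K kt kt' hK tau P hiv hcpt Kc hKc hKcsub
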